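/- Let 𝕂 be a field of prime characteristic p, q, r ∈ 𝕂ˣ, and let j, n ∈ ℕ₀ with j < n, n - j even, q^{n+j-1}r² = 1, and b_n = ∏_{i=0}^{n-1}(1-q^i r) ≠ 0. Define Q = (∑_{i=0}^{(n-j)/2 - 1} (q^{n+j-1}r²)^i) · ∏_{i=0}^{n-j-1}(1 - q^{j+i}r). Then Q = 0 if and only if 2p divides n - j. -/

import Mathlib

/-! At `x = q^{n+j-1} r² = 1` the q-number `((n-j)/2)_x` is the integer `(n-j)/2`, which vanishes in
characteristic `p` iff `p ∣ (n-j)/2`; the product is a factor of `b_n ≠ 0`, so it never vanishes. -/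

variable {K : Type*} [Field K]

/-- The q-number `(k)_x = ∑_{i=0}^{k-1} x^i`. -/
def qNum (x : K) (k : ℕ) : K := ∑ i ∈ Finset.range k, x ^ i

/-- The q-factorial `(m)_q! = ∏_{k=1}^m (k)_q`. -/
def qFac (q : K) (m : ℕ) : K := ∏ k ∈ Finset.range m, qNum q (k + 1)

/-- `b_m = ∏_{i=0}^{m-1} (1 - q^i r)`. -/
def bProd (q r : K) (m : ℕ) : K := ∏ i ∈ Finset.range m, (1 - q ^ i * r)

/-- The recursively defined set 𝕁 = 𝕁^p_{q,r,s}. -/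
def memJ (q r s : K) : ℕ → Prop
  | j => q ^ (j * (j - 1) / 2) * (-r) ^ j * s = -1 ∧
      ∀ n, n < j → memJ q r s n →
        if (j - n) % 2 = 0
        then qNum (q ^ (n + j - 1) * r ^ 2) ((j - n) / 2) = 0
        else qNum (-(q ^ ((n + j - 1) / 2) * r)) (j - n) = 0
  termination_by j => j

/-- The subset 𝕁₁ ⊆ 𝕁 (condition (1) of Lemma le:J). -/
def memJ1 (q r s : K) (j : ℕ) : Prop :=
  memJ q r s j ∧ ∀ k, k < j → memJ q r s k → q ^ (k + j - 1) * r ^ 2 ≠ 1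

/-- The subset 𝕁₂ ⊆ 𝕁 (condition (2) of Lemma le:J). -/
def memJ2 (q r s : K) (n : ℕ) : Prop :=
  memJ q r s n ∧ ∃ j, j < n ∧ memJ q r s j ∧ q ^ (n + j - 1) * r ^ 2 = 1

theorem qNum_one (k : ℕ) : qNum (1 : K) k = k := by
  simp [qNum]

theorem bProd_add (q r : K) (j m : ℕ) :
    bProd q r (j + m) = bProd q r j * ∏ i ∈ Finset.range m, (1 - q ^ (j + i) * r) := by
  rw [bProd, Finset.prod_range_add, bProd]

theorem prod_range_sub_ne_zero_of_bProd_ne_zero {q r : K} {j n : ℕ} (hjn : j ≤ n)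
    (hb : bProd q r n ≠ 0) : ∏ i ∈ Finset.range (n - j), (1 - q ^ (j + i) * r) ≠ 0 := by
  obtain ⟨m, rfl⟩ := Nat.exists_eq_add_of_le hjn
  rw [bProd_add] at hb
  simpa using right_ne_zero_of_mul hb

theorem stmt_9_general (p : ℕ) [CharP K p] (q r : K)
    (j n : ℕ) (hjn : j < n) (heven : (n - j) % 2 = 0)
    (hqr : q ^ (n + j - 1) * r ^ 2 = 1) (hb : bProd q r n ≠ 0) :
    qNum (q ^ (n + j - 1) * r ^ 2) ((n - j) / 2) *
        ∏ i ∈ Finset.range (n - j), (1 - q ^ (j + i) * r) = 0 ↔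
      (2 * p) ∣ (n - j) := by
  rw [hqr, qNum_one, mul_eq_zero,
    or_iff_left (prod_range_sub_ne_zero_of_bProd_ne_zero hjn.le hb),
    CharP.cast_eq_zero_iff K p, Nat.dvd_div_iff_mul_dvd (Nat.dvd_of_mod_eq_zero heven)]

theorem stmt_9 (p : ℕ) [CharP K p] (hp : p.Prime) (q r : K) (hq : q ≠ 0) (hr : r ≠ 0)
    (j n : ℕ) (hjn : j < n) (heven : (n - j) % 2 = 0)
    (hqr : q ^ (n + j - 1) * r ^ 2 = 1) (hb : bProd q r n ≠ 0) :
    qNum (q ^ (n + j - 1) * r ^ 2) ((n - j) / 2) *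
        ∏ i ∈ Finset.range (n - j), (1 - q ^ (j + i) * r) = 0 ↔
      (2 * p) ∣ (n - j) :=
  stmt_9_general p q r j n hjn heven hqr hb
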